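/- arXiv:2301.02506 — 7 statements merged into one kernel-verified Lean document; each statement's English description precedes it below -/
import Mathlib

section
/- For each a ≥ 0, the function x ↦ y·H(a/y) restricted to y ≥ a (interpreting the case a = 0 as y·H(0) = y) is a bijection onto [0,∞): i.e., for every x ≥ 0 there is a unique y ≥ a with y·H(a/y) = x. Consequently the inverse function Ĥ_a : [0,∞) → [a,∞) is well defined, increasing in x, and satisfies Ĥ_0(x) = x and Ĥ_a(0) = a. -/
/-- The rate function `H(t) = 1 - t + t log t` for `t > 0`, with `H(0) = 1`. -/
noncomputable def H (t : ℝ) : ℝ := if t = 0 then 1 else 1 - t + t * Real.log t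

lemma f_zero_case (y : ℝ) : y * H (0 / y) = y := by
  simp [H]

lemma f_self {a : ℝ} (ha : 0 < a) : a * H (a / a) = 0 := by
  rw [div_self ha.ne']
  norm_num [H]

lemma f_eq {a y : ℝ} (ha : 0 < a) (hy : a ≤ y) :
    y * H (a / y) = y - a + a * (Real.log a - Real.log y) := by
  have hy0 : 0 < y := ha.trans_le hy
  have hne : a / y ≠ 0 := by positivity
  rw [H, if_neg hne, Real.log_div ha.ne' hy0.ne']
  field_simp

lemma f_strictMono {a y1 y2 : ℝ} (ha : 0 < a) (h1 : a ≤ y1) (h12 : y1 < y2) :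
    y1 * H (a / y1) < y2 * H (a / y2) := by
  have h10 : 0 < y1 := ha.trans_le h1
  have h20 : 0 < y2 := h10.trans h12
  rw [f_eq ha h1, f_eq ha (h1.trans h12.le)]
  have hratio : (0:ℝ) < y2 / y1 := div_pos h20 h10
  have hne1 : y2 / y1 ≠ 1 := by
    intro h
    have : y2 = y1 := by field_simp at h; linarith
    linarith
  have hlog := Real.log_lt_sub_one_of_pos hratio hne1
  rw [Real.log_div h20.ne' h10.ne'] at hlog
  have hL : Real.log y2 - Real.log y1 > 0 := by
    have := Real.log_lt_log h10 h12; linarith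
  have key : y1 * (Real.log y2 - Real.log y1) < y2 - y1 := by
    have := mul_lt_mul_of_pos_left hlog h10
    have hy1 : y1 * (y2 / y1 - 1) = y2 - y1 := by field_simp
    linarith [this, hy1.ge, hy1.le]
  have key2 : a * (Real.log y2 - Real.log y1) ≤ y1 * (Real.log y2 - Real.log y1) :=
    mul_le_mul_of_nonneg_right h1 hL.le
  nlinarith

lemma log_le_half {u : ℝ} (hu : 0 < u) : Real.log u ≤ u / 2 := by
  have hs : 0 < Real.sqrt u := Real.sqrt_pos.mpr hu
  have h1 : Real.log (Real.sqrt u) ≤ Real.sqrt u - 1 := Real.log_le_sub_one_of_pos hs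
  have h2 : Real.log u = 2 * Real.log (Real.sqrt u) := by
    rw [Real.log_sqrt hu.le]; ring
  nlinarith [sq_nonneg (Real.sqrt u - 2), Real.sq_sqrt hu.le]

lemma f_lower {a M : ℝ} (ha : 0 < a) (hM : a ≤ M) :
    M - M / 2 - a ≤ M * H (a / M) := by
  have hM0 : 0 < M := ha.trans_le hM
  rw [f_eq ha hM]
  have h := log_le_half (div_pos hM0 ha)
  rw [Real.log_div hM0.ne' ha.ne'] at h
  have : a * (Real.log M - Real.log a) ≤ a * (M / a / 2) :=
    mul_le_mul_of_nonneg_left h ha.le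
  have ha2 : a * (M / a / 2) = M / 2 := by field_simp
  nlinarith

lemma f_exists {a x : ℝ} (ha : 0 < a) (hx : 0 ≤ x) :
    ∃ y, a ≤ y ∧ y * H (a / y) = x := by
  set M : ℝ := 2 * x + 2 * a with hMdef
  have hM : a ≤ M := by linarith
  have hfa : a * H (a / a) = 0 := f_self ha
  have hfM : x ≤ M * H (a / M) := by
    have := f_lower ha hM
    have : M - M / 2 - a = x := by rw [hMdef]; ring
    linarith [f_lower ha hM]
  have hg : ContinuousOn (fun y => y - a + a * (Real.log a - Real.log y)) (Set.Icc a M) := by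
    apply ContinuousOn.add
    · exact continuousOn_id.sub continuousOn_const
    · apply ContinuousOn.mul continuousOn_const
      apply ContinuousOn.sub continuousOn_const
      apply Real.continuousOn_log.mono
      intro y hy
      have : 0 < y := ha.trans_le hy.1
      simp [this.ne']
  have hcont : ContinuousOn (fun y => y * H (a / y)) (Set.Icc a M) :=
    hg.congr (fun y hy => f_eq ha hy.1)
  have hIVT := intermediate_value_Icc hM hcont
  have hxmem : x ∈ Set.Icc (a * H (a / a)) (M * H (a / M)) := by
    constructor
    · rw [hfa]; exact hx
    · exact hfM
  obtain ⟨y, hy, hyx⟩ := hIVT hxmem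
  exact ⟨y, hy.1, hyx⟩

/-- For each `a ≥ 0`, the map `y ↦ y·H(a/y)` on `[a,∞)` is a bijection onto `[0,∞)`,
so the inverse `Ĥ_a` is well defined; any such inverse is increasing in `x` and
satisfies `Ĥ_0(x) = x` and `Ĥ_a(0) = a`. -/
theorem Hhat_wellDefined :
    (∀ a : ℝ, 0 ≤ a → ∀ x : ℝ, 0 ≤ x → ∃! y : ℝ, a ≤ y ∧ y * H (a / y) = x) ∧
    (∀ Hhat : ℝ → ℝ → ℝ,
      (∀ a : ℝ, 0 ≤ a → ∀ x : ℝ, 0 ≤ x →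
        a ≤ Hhat a x ∧ Hhat a x * H (a / Hhat a x) = x) →
      ((∀ a : ℝ, 0 ≤ a → MonotoneOn (Hhat a) (Set.Ici 0)) ∧
       (∀ x : ℝ, 0 ≤ x → Hhat 0 x = x) ∧
       (∀ a : ℝ, 0 ≤ a → Hhat a 0 = a))) := by
  constructor
  · intro a ha x hx
    rcases eq_or_lt_of_le ha with h0 | hpos
    · -- a = 0
      subst h0
      refine ⟨x, ⟨hx, f_zero_case x⟩, ?_⟩
      intro y ⟨hy, hyx⟩
      rw [f_zero_case y] at hyx
      exact hyx
    · obtain ⟨y, hy1, hy2⟩ := f_exists hpos hx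
      refine ⟨y, ⟨hy1, hy2⟩, ?_⟩
      intro z ⟨hz1, hz2⟩
      rcases lt_trichotomy z y with h | h | h
      · exact absurd (hz2.trans hy2.symm) (f_strictMono hpos hz1 h).ne
      · exact h
      · exact absurd (hy2.trans hz2.symm) (f_strictMono hpos hy1 h).ne
  · intro Hhat hH
    have key : ∀ a : ℝ, 0 < a → ∀ x1 x2 : ℝ, 0 ≤ x1 → 0 ≤ x2 → x1 ≤ x2 →
        Hhat a x1 ≤ Hhat a x2 := by
      intro a ha x1 x2 hx1 hx2 h12
      by_contra hlt
      push_neg at hlt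
      obtain ⟨hy2a, hy2x⟩ := hH a ha.le x2 hx2
      obtain ⟨hy1a, hy1x⟩ := hH a ha.le x1 hx1
      have := f_strictMono ha hy2a hlt
      rw [hy1x, hy2x] at this
      linarith
    have h0 : ∀ x : ℝ, 0 ≤ x → Hhat 0 x = x := by
      intro x hx
      obtain ⟨hy1, hy2⟩ := hH 0 le_rfl x hx
      rw [f_zero_case (Hhat 0 x)] at hy2
      exact hy2
    refine ⟨?_, h0, ?_⟩
    · intro a ha
      rcases eq_or_lt_of_le ha with h | hpos
      · subst h
        intro x1 hx1 x2 hx2 h12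
        rw [h0 x1 hx1, h0 x2 hx2]
        exact h12
      · intro x1 hx1 x2 hx2 h12
        exact key a hpos x1 x2 hx1 hx2 h12
    · intro a ha
      rcases eq_or_lt_of_le ha with h | hpos
      · subst h
        exact h0 0 le_rfl
      · obtain ⟨hy1, hy2⟩ := hH a ha 0 le_rfl
        rcases eq_or_lt_of_le hy1 with h | h
        · exact h.symm
        · have := f_strictMono hpos le_rfl h
          rw [f_self hpos, hy2] at this
          linarith
end

section
/- Let A ⊂ ℝ^d be a compact convex set with nonempty interior, and let μ be a Borel probability measure on A with density f satisfying ess inf_{x∈A} f(x) =: f_0 > 0. Then there exists ε' > 0 such that μ(B(x,r)) ≥ ε' r^d for all x ∈ A and all r ∈ (0,1). -/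
open MeasureTheory Metric

/-- If `A ⊂ ℝ^d` is compact convex with nonempty interior and `μ` is a probability
measure on `A` with density `f` essentially bounded below by `f₀ > 0`, then there is
`ε' > 0` with `μ(B(x,r)) ≥ ε' r^d` for all `x ∈ A` and `r ∈ (0,1)`. -/
theorem measure_closedBall_lower_bound
    {d : ℕ} (A : Set (EuclideanSpace ℝ (Fin d)))
    (hconv : Convex ℝ A) (hcomp : IsCompact A) (hint : (interior A).Nonempty)
    (f : EuclideanSpace ℝ (Fin d) → ℝ)
    (μ : Measure (EuclideanSpace ℝ (Fin d)))
    (hμ : μ = (volume.restrict A).withDensity fun x => ENNReal.ofReal (f x))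
    (hprob : IsProbabilityMeasure μ)
    (f₀ : ℝ) (hf₀ : 0 < f₀)
    (hess : ∀ᵐ x ∂(volume.restrict A), f₀ ≤ f x) :
    ∃ ε' > (0 : ℝ), ∀ x ∈ A, ∀ r : ℝ, 0 < r → r < 1 →
      ENNReal.ofReal (ε' * r ^ d) ≤ μ (closedBall x r) := by
  set R : ℝ := diam A + 1 with hR
  have hdiam : 0 ≤ diam A := diam_nonneg
  have hR1 : (1 : ℝ) ≤ R := by simp [hR]; linarith
  have hRpos : 0 < R := lt_of_lt_of_le one_pos hR1
  have hvolA_pos : 0 < volume A := Measure.measure_pos_of_nonempty_interior _ hint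
  have hvolA_fin : volume A ≠ ⊤ := hcomp.measure_lt_top.ne
  set V : ℝ := (volume A).toReal with hV
  have hVpos : 0 < V := ENNReal.toReal_pos hvolA_pos.ne' hvolA_fin
  refine ⟨f₀ * V / R ^ d, by positivity, fun x hx r hr hr1 => ?_⟩
  set t : ℝ := r / R with ht
  have htpos : 0 < t := div_pos hr hRpos
  have ht1 : t ≤ 1 := by
    rw [ht, div_le_one hRpos]; linarith
  have htR : t * R = r := by rw [ht]; field_simp
  clear_value t
  -- image of A under homothety at x with ratio t
  have hsub : (AffineMap.homothety x t) '' A ⊆ closedBall x r ∩ A := by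
    rintro _ ⟨y, hy, rfl⟩
    constructor
    · rw [mem_closedBall, AffineMap.homothety_apply]
      have : dist (t • (y -ᵥ x) +ᵥ x) x = t * dist y x := by
        simp [dist_eq_norm, norm_smul, abs_of_pos htpos]
      rw [this]
      have hd : dist y x ≤ R := le_trans (dist_le_diam_of_mem hcomp.isBounded hy hx)
        (by linarith)
      calc t * dist y x ≤ t * R := by
            exact mul_le_mul_of_nonneg_left hd htpos.le
        _ = r := htR
    · have h2 : (AffineMap.homothety x t) y = (1 - t) • x + t • y := by
        simp only [AffineMap.homothety_apply, vsub_eq_sub, vadd_eq_add]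
        module
      rw [h2]
      exact hconv hx hy (by linarith) htpos.le (by linarith)
  have hvol_image : volume ((AffineMap.homothety x t) '' A)
      = ENNReal.ofReal (t ^ d) * volume A := by
    rw [Measure.addHaar_image_homothety, finrank_euclideanSpace_fin,
      abs_of_pos (pow_pos htpos d)]
  -- measure lower bound
  have hmeas : μ (closedBall x r)
      = ∫⁻ y in closedBall x r, ENNReal.ofReal (f y) ∂(volume.restrict A) := by
    rw [hμ, withDensity_apply _ measurableSet_closedBall]
  have hstep1 : ENNReal.ofReal f₀ * (volume.restrict A) (closedBall x r)
      ≤ μ (closedBall x r) := by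
    rw [hmeas]
    have : ∫⁻ _ in closedBall x r, ENNReal.ofReal f₀ ∂(volume.restrict A)
        = ENNReal.ofReal f₀ * (volume.restrict A) (closedBall x r) := by
      simp [lintegral_const, mul_comm]
    rw [← this]
    refine lintegral_mono_ae ?_
    filter_upwards [ae_restrict_of_ae hess] with y hy
    exact ENNReal.ofReal_le_ofReal hy
  have hstep2 : volume ((AffineMap.homothety x t) '' A)
      ≤ (volume.restrict A) (closedBall x r) := by
    rw [Measure.restrict_apply measurableSet_closedBall]
    exact measure_mono hsub
  have key : ENNReal.ofReal f₀ * (ENNReal.ofReal (t ^ d) * volume A)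
      ≤ μ (closedBall x r) := by
    refine le_trans ?_ hstep1
    rw [← hvol_image]
    exact mul_le_mul_right hstep2 _
  refine le_trans ?_ key
  have hAV : ENNReal.ofReal V ≤ volume A := by
    rw [hV, ENNReal.ofReal_toReal hvolA_fin]
  calc ENNReal.ofReal (f₀ * V / R ^ d * r ^ d)
      = ENNReal.ofReal (f₀ * (t ^ d * V)) := by
        congr 1
        rw [ht, div_pow]
        field_simp
    _ = ENNReal.ofReal f₀ * (ENNReal.ofReal (t ^ d) * ENNReal.ofReal V) := by
        rw [ENNReal.ofReal_mul hf₀.le, ENNReal.ofReal_mul (by positivity)]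
    _ ≤ ENNReal.ofReal f₀ * (ENNReal.ofReal (t ^ d) * volume A) := by
        exact mul_le_mul_right (mul_le_mul_right hAV _) _
end

section
/- If A ⊂ ℝ^d is a compact convex set with nonempty interior, then the restriction of Lebesgue measure to A is a doubling measure: there exists a constant c such that Vol(B(x,2r) ∩ A) ≤ c·Vol(B(x,r) ∩ A) for all x ∈ A and r > 0. -/
open MeasureTheory Metric NNReal ENNReal

/-- Homothety of an inner ball toward a point of a convex set stays in the set. -/
lemma convex_closedBall_combo_mem {E : Type*} [NormedAddCommGroup E] [NormedSpace ℝ E]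
    {A : Set E} (hconv : Convex ℝ A) {z x : E} {ρ : ℝ}
    (hball : closedBall z ρ ⊆ A) (hx : x ∈ A) {t : ℝ} (ht0 : 0 < t) (ht1 : t ≤ 1) :
    closedBall (x + t • (z - x)) (t * ρ) ⊆ A := by
  intro y hy
  set u := z + t⁻¹ • (y - (x + t • (z - x))) with hu
  have hnorm : ‖y - (x + t • (z - x))‖ ≤ t * ρ := by
    rw [mem_closedBall, dist_eq_norm] at hy; exact hy
  have hu_mem : u ∈ closedBall z ρ := by
    rw [mem_closedBall, dist_eq_norm, hu]
    have : z + t⁻¹ • (y - (x + t • (z - x))) - z = t⁻¹ • (y - (x + t • (z - x))) := by abel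
    rw [this, norm_smul, Real.norm_eq_abs, abs_of_pos (inv_pos.2 ht0)]
    calc t⁻¹ * ‖y - (x + t • (z - x))‖ ≤ t⁻¹ * (t * ρ) := by
          exact mul_le_mul_of_nonneg_left hnorm (inv_pos.2 ht0).le
      _ = ρ := by field_simp
  have hy_eq : y = (1 - t) • x + t • u := by
    rw [hu, smul_add, smul_inv_smul₀ ht0.ne']
    module
  rw [hy_eq]
  exact hconv hx (hball hu_mem) (by linarith) ht0.le (by ring)

/-- The restriction of Lebesgue measure to a compact convex set `A ⊂ ℝ^d` with
nonempty interior is doubling. -/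
theorem lebesgue_restrict_convex_doubling
    {d : ℕ} (A : Set (EuclideanSpace ℝ (Fin d)))
    (hconv : Convex ℝ A) (hcomp : IsCompact A) (hint : (interior A).Nonempty) :
    ∃ c : ℝ≥0, ∀ x ∈ A, ∀ r : ℝ, 0 < r →
      volume (closedBall x (2 * r) ∩ A) ≤ c * volume (closedBall x r ∩ A) := by
  obtain ⟨z, hz⟩ := hint
  obtain ⟨ρ, hρ0, hρA'⟩ := (Metric.nhds_basis_closedBall.mem_iff).1
    (mem_interior_iff_mem_nhds.1 hz)
  have hρA : closedBall z ρ ⊆ A := hρA'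
  obtain ⟨R0, hR0⟩ := hcomp.isBounded.subset_closedBall z
  set R : ℝ := max R0 ρ with hR
  have hρR : ρ ≤ R := le_max_right _ _
  have hR0' : 0 < R := lt_of_lt_of_le hρ0 hρR
  have hAR : A ⊆ closedBall z R := hR0.trans (closedBall_subset_closedBall (le_max_left _ _))
  set V : ENNReal := volume (ball (0 : EuclideanSpace ℝ (Fin d)) 1) with hV
  have hd : Module.finrank ℝ (EuclideanSpace ℝ (Fin d)) = d := finrank_euclideanSpace_fin
  refine ⟨((4 * R / ρ) ^ d).toNNReal, fun x hx r hr => ?_⟩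
  have hcast : ((((4 * R / ρ) ^ d).toNNReal : ℝ≥0) : ℝ≥0∞)
      = ENNReal.ofReal ((4 * R / ρ) ^ d) := rfl
  have hdxz : dist x z ≤ R := mem_closedBall.1 (hAR hx)
  set D : ℝ := dist x z + ρ with hD
  have hD0 : 0 < D := by positivity
  have hDR : D ≤ 2 * R := by simp only [hD]; linarith
  by_cases hcase : D ≤ r
  · -- large radius: inner ball is inside `closedBall x r`
    have h1 : closedBall z ρ ⊆ closedBall x r ∩ A := by
      intro y hy
      refine ⟨mem_closedBall.2 ?_, hρA hy⟩
      calc dist y x ≤ dist y z + dist z x := dist_triangle _ _ _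
        _ ≤ ρ + dist x z := by
            have := mem_closedBall.1 hy
            rw [dist_comm z x]; linarith
        _ = D := by rw [hD]; ring
        _ ≤ r := hcase
    calc volume (closedBall x (2 * r) ∩ A) ≤ volume (closedBall z R) :=
          measure_mono ((Set.inter_subset_right).trans hAR)
      _ = ENNReal.ofReal (R ^ d) * V := by
          rw [Measure.addHaar_closedBall volume z hR0'.le, hd]
      _ ≤ ENNReal.ofReal ((4 * R / ρ) ^ d) * (ENNReal.ofReal (ρ ^ d) * V) := by
          rw [← mul_assoc, ← ENNReal.ofReal_mul (by positivity)]
          refine mul_le_mul_left (ENNReal.ofReal_le_ofReal ?_) V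
          rw [← mul_pow, div_mul_cancel₀ _ hρ0.ne']
          exact pow_le_pow_left₀ hR0'.le (by linarith) d
      _ = ENNReal.ofReal ((4 * R / ρ) ^ d) * volume (closedBall z ρ) := by
          rw [Measure.addHaar_closedBall volume z hρ0.le, hd]
      _ ≤ _ := by
          rw [hcast]
          exact mul_le_mul_right (measure_mono h1) _
  · -- small radius: homothety with ratio `t = r / D`
    push_neg at hcase
    set t : ℝ := r / D with ht
    have ht0 : 0 < t := div_pos hr hD0
    have ht1 : t ≤ 1 := (div_le_one hD0).2 hcase.le
    set w := x + t • (z - x) with hw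
    have hsub1 : closedBall w (t * ρ) ⊆ A :=
      convex_closedBall_combo_mem hconv hρA hx ht0 ht1
    have hsub2 : closedBall w (t * ρ) ⊆ closedBall x r := by
      intro y hy
      refine mem_closedBall.2 ?_
      have hwx : dist w x = t * dist x z := by
        rw [hw, dist_eq_norm]
        have : x + t • (z - x) - x = t • (z - x) := by abel
        rw [this, norm_smul, Real.norm_eq_abs, abs_of_pos ht0, ← dist_eq_norm, dist_comm z x]
      calc dist y x ≤ dist y w + dist w x := dist_triangle _ _ _
        _ ≤ t * ρ + t * dist x z := by
            have := mem_closedBall.1 hy; linarith [hwx ▸ le_refl (dist w x)]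
        _ = t * D := by rw [hD]; ring
        _ = r := by rw [ht]; field_simp
    have hsub : closedBall w (t * ρ) ⊆ closedBall x r ∩ A :=
      Set.subset_inter hsub2 hsub1
    calc volume (closedBall x (2 * r) ∩ A) ≤ volume (closedBall x (2 * r)) :=
          measure_mono Set.inter_subset_left
      _ = ENNReal.ofReal ((2 * r) ^ d) * V := by
          rw [Measure.addHaar_closedBall volume x (by positivity), hd]
      _ ≤ ENNReal.ofReal ((4 * R / ρ) ^ d) * (ENNReal.ofReal ((t * ρ) ^ d) * V) := by
          rw [← mul_assoc, ← ENNReal.ofReal_mul (by positivity)]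
          refine mul_le_mul_left (ENNReal.ofReal_le_ofReal ?_) V
          rw [← mul_pow]
          refine pow_le_pow_left₀ (by positivity) ?_ d
          have h2r : 2 * r ≤ 4 * R / D * r := by
            rw [div_mul_eq_mul_div, le_div_iff₀ hD0]
            nlinarith
          calc 2 * r ≤ 4 * R / D * r := h2r
            _ = 4 * R / ρ * (t * ρ) := by rw [ht]; field_simp
      _ = ENNReal.ofReal ((4 * R / ρ) ^ d) * volume (closedBall w (t * ρ)) := by
          rw [Measure.addHaar_closedBall volume w (by positivity), hd]
      _ ≤ _ := by
          rw [hcast]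
          exact mul_le_mul_right (measure_mono hsub) _
end

section
/- Let A ⊂ ℝ^d be a compact convex polytope, B ⊂ ℝ^d a closed ball (or any compact convex set), and y ∈ A \ B. Then there exists a vertex v of A such that the line segment [y,v] is contained in A \ B. -/
/-- If `A` is a compact convex polytope (convex hull of a finite vertex set `V`),
`B` is a compact convex set, and `y ∈ A \ B`, then some segment `[y,v]` to a vertex
`v ∈ V` is contained in `A \ B`. -/
theorem segment_to_vertex_avoiding_convex_set
    {d : ℕ} (V : Finset (EuclideanSpace ℝ (Fin d)))
    (B : Set (EuclideanSpace ℝ (Fin d)))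
    (hBconv : Convex ℝ B) (hBcomp : IsCompact B)
    (y : EuclideanSpace ℝ (Fin d))
    (hy : y ∈ convexHull ℝ (↑V : Set (EuclideanSpace ℝ (Fin d))) \ B) :
    ∃ v ∈ V, segment ℝ y v ⊆ convexHull ℝ (↑V : Set (EuclideanSpace ℝ (Fin d))) \ B := by
  obtain ⟨hyA, hyB⟩ := hy
  -- strictly separate y from B
  obtain ⟨f, u, hfy, hfB⟩ :=
    geometric_hahn_banach_point_closed hBconv hBcomp.isClosed hyB
  -- V is nonempty
  have hVne : V.Nonempty := by
    rcases V.eq_empty_or_nonempty with h | h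
    · subst h; simp at hyA
    · exact h
  -- pick v minimizing f over V
  obtain ⟨v, hvV, hvmin⟩ := V.exists_mem_eq_inf' hVne f
  refine ⟨v, hvV, ?_⟩
  have hvy : f v ≤ f y := by
    have hsub : (↑V : Set (EuclideanSpace ℝ (Fin d))) ⊆ {x | V.inf' hVne f ≤ f x} := by
      intro x hx
      exact Finset.inf'_le f hx
    have hconv : Convex ℝ {x : EuclideanSpace ℝ (Fin d) | V.inf' hVne f ≤ f x} :=
      convex_halfSpace_ge (f := f) f.isLinear _
    have := convexHull_min hsub hconv hyA
    simpa [← hvmin] using this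
  intro x hx
  constructor
  · have hvhull : v ∈ convexHull ℝ (↑V : Set (EuclideanSpace ℝ (Fin d))) :=
      subset_convexHull ℝ _ hvV
    exact (convex_convexHull ℝ _).segment_subset hyA hvhull hx
  · intro hxB
    obtain ⟨a, b, ha, hb, hab, rfl⟩ := hx
    have hfx : f (a • y + b • v) ≤ f y := by
      have : f (a • y + b • v) = a * f y + b * f v := by
        simp [map_add, map_smul]
      rw [this]
      calc a * f y + b * f v ≤ a * f y + b * f y := by nlinarith
        _ = f y := by rw [← add_mul, hab, one_mul]
    have := hfB _ hxB
    linarith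
end

section
/- Let A ⊂ ℝ^d be a compact convex polytope. There exist δ_1 > 0 and a constant c (depending only on A) such that for every x ∈ A and every r ∈ (0, δ_1): the set A \ B(x,r) has at most two connected components, and if it has exactly two components then at least one of them has diameter at most c·r. -/
open Metric
open scoped RealInnerProductSpace

section Aux

variable {d : ℕ}

local notation "E" => EuclideanSpace ℝ (Fin d)

lemma exists_unit_orthogonal (hd : 2 ≤ d) (ξ : E) (hξ : ξ ≠ 0) :
    ∃ n : E, ‖n‖ = 1 ∧ ⟪ξ, n⟫ = 0 := by
  have hfr : Module.finrank ℝ (ℝ ∙ ξ) = 1 := finrank_span_singleton hξ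
  have hsum := Submodule.finrank_add_finrank_orthogonal (K := (ℝ ∙ ξ))
  have hE : Module.finrank ℝ E = d := finrank_euclideanSpace_fin
  have hpos : 0 < Module.finrank ℝ ((ℝ ∙ ξ)ᗮ) := by omega
  have hne : ((ℝ ∙ ξ)ᗮ) ≠ ⊥ := by
    intro h
    rw [h] at hpos
    simp at hpos
  obtain ⟨b, hbK, hb0⟩ := Submodule.exists_mem_ne_zero_of_ne_bot hne
  have hbn : ‖b‖ ≠ 0 := norm_ne_zero_iff.mpr hb0
  refine ⟨‖b‖⁻¹ • b, ?_, ?_⟩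
  · rw [norm_smul, norm_inv, norm_norm, inv_mul_cancel₀ hbn]
  · have h0 : ⟪ξ, b⟫ = 0 :=
      (Submodule.mem_orthogonal _ _).mp hbK ξ (Submodule.mem_span_singleton_self ξ)
    rw [real_inner_smul_right, h0, mul_zero]

lemma finset_min_dist (V : Finset E) :
    ∃ m > (0:ℝ), ∀ u ∈ V, ∀ v ∈ V, u ≠ v → m ≤ dist u v := by
  have hfin : (V : Set E).Finite := V.finite_toSet
  have hpos : 0 < (V : Set E).einfsep := hfin.einfsep_pos
  rw [Set.einfsep_pos] at hpos
  obtain ⟨C, hC, hCle⟩ := hpos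
  refine ⟨(min C 1).toReal, ?_, ?_⟩
  · apply ENNReal.toReal_pos
    · exact (lt_min hC zero_lt_one).ne'
    · exact ((min_le_right C 1).trans_lt ENNReal.one_lt_top).ne
  · intro u hu v hv huv
    rw [dist_edist]
    apply ENNReal.toReal_mono (edist_ne_top u v)
    exact (min_le_left C 1).trans (hCle u hu v hv huv)

lemma extreme_of_localMax {A : Set E} {x₀ p : E}
    (hA : Convex ℝ A) (hp : p ∈ A) {ρ : ℝ} (hρ : 0 < ρ)
    (hmax : ∀ q ∈ A, dist q p ≤ ρ → dist q x₀ ≤ dist p x₀) :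
    p ∈ A.extremePoints ℝ := by
  refine mem_extremePoints.mpr ⟨hp, fun a ha b hb hseg => ?_⟩
  rcases eq_or_ne a b with rfl | hab
  · rw [openSegment_same] at hseg
    have : p = a := hseg
    exact ⟨this.symm, this.symm⟩
  · exfalso
    rw [openSegment_eq_image'] at hseg
    obtain ⟨t, ht, hpt⟩ := hseg
    obtain ⟨ht0, ht1⟩ := ht
    have hu0 : b - a ≠ 0 := sub_ne_zero.mpr hab.symm
    have hun : 0 < ‖b - a‖ := norm_pos_iff.mpr hu0
    set s : ℝ := min (min 1 ((1 - t)/t)) (ρ/(t*‖b - a‖)) with hs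
    have hs0 : 0 < s :=
      lt_min (lt_min one_pos (div_pos (by linarith) ht0)) (div_pos hρ (by positivity))
    have hs1 : s ≤ 1 := le_trans (min_le_left _ _) (min_le_left _ _)
    have hst : s * t ≤ 1 - t := by
      have h : s ≤ (1 - t)/t := (min_le_left _ _).trans (min_le_right _ _)
      rw [le_div_iff₀ ht0] at h
      linarith
    have hsρ : s * t * ‖b - a‖ ≤ ρ := by
      have h : s ≤ ρ/(t*‖b - a‖) := min_le_right _ _
      rw [le_div_iff₀ (by positivity)] at h
      calc s * t * ‖b - a‖ = s * (t * ‖b - a‖) := by ring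
        _ ≤ ρ := h
    have hstpos : 0 < s * t := mul_pos hs0 ht0
    set q₂ := p + (s*t) • (b - a) with hq₂
    set q₁ := p - (s*t) • (b - a) with hq₁
    have hq₂A : q₂ ∈ A := by
      have he : q₂ = a + (t + s*t) • (b - a) := by
        rw [hq₂, ← hpt]; module
      rw [he]
      apply hA.segment_subset ha hb
      rw [segment_eq_image']
      exact ⟨t + s*t, ⟨by positivity, by linarith⟩, rfl⟩
    have hq₁A : q₁ ∈ A := by
      have he : q₁ = a + (t - s*t) • (b - a) := by
        rw [hq₁, ← hpt]; module
      rw [he]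
      apply hA.segment_subset ha hb
      rw [segment_eq_image']
      refine ⟨t - s*t, ⟨?_, ?_⟩, rfl⟩
      · nlinarith
      · nlinarith
    have hnsm : ‖(s*t) • (b - a)‖ = s * t * ‖b - a‖ := by
      rw [norm_smul, Real.norm_eq_abs, abs_of_pos hstpos]
    have hd₂ : dist q₂ p ≤ ρ := by
      rw [dist_eq_norm]
      have : q₂ - p = (s*t) • (b - a) := by rw [hq₂]; abel
      rw [this, hnsm]; exact hsρ
    have hd₁ : dist q₁ p ≤ ρ := by
      rw [dist_eq_norm]
      have : q₁ - p = -((s*t) • (b - a)) := by rw [hq₁]; abel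
      rw [this, norm_neg, hnsm]; exact hsρ
    have h₂ := hmax q₂ hq₂A hd₂
    have h₁ := hmax q₁ hq₁A hd₁
    have e₂ : dist q₂ x₀ = ‖(p - x₀) + (s*t) • (b - a)‖ := by
      rw [dist_eq_norm]; congr 1; rw [hq₂]; abel
    have e₁ : dist q₁ x₀ = ‖(p - x₀) - (s*t) • (b - a)‖ := by
      rw [dist_eq_norm]; congr 1; rw [hq₁]; abel
    have ep : dist p x₀ = ‖p - x₀‖ := dist_eq_norm _ _
    have hpar := parallelogram_law_with_norm ℝ (p - x₀) ((s*t) • (b - a))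
    have hNpos : 0 < ‖(s*t) • (b - a)‖ := by rw [hnsm]; positivity
    rw [e₂, ep] at h₂
    rw [e₁, ep] at h₁
    nlinarith [norm_nonneg ((p - x₀) + (s*t) • (b - a)), norm_nonneg ((p - x₀) - (s*t) • (b - a)),
      norm_nonneg (p - x₀)]

end Aux

set_option maxHeartbeats 2000000 in
/-- For a compact convex polytope `A ⊂ ℝ^d` (`d ≥ 2`, full-dimensional) there are
`δ₁ > 0` and `c > 0` such that for all `x ∈ A` and `r ∈ (0, δ₁)`, the set
`A \ B(x,r)` has at most two connected components, and if there are two then at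
least one of them has diameter at most `c·r`. -/
theorem polytope_remove_ball_components
    {d : ℕ} (hd : 2 ≤ d) (V : Finset (EuclideanSpace ℝ (Fin d)))
    (A : Set (EuclideanSpace ℝ (Fin d)))
    (hA : A = convexHull ℝ (↑V : Set (EuclideanSpace ℝ (Fin d))))
    (hint : (interior A).Nonempty) :
    ∃ δ₁ > (0 : ℝ), ∃ c > (0 : ℝ), ∀ x ∈ A, ∀ r : ℝ, 0 < r → r < δ₁ →
      ((∃ y z, ∀ w ∈ A \ closedBall x r,
          connectedComponentIn (A \ closedBall x r) w
              = connectedComponentIn (A \ closedBall x r) y ∨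
          connectedComponentIn (A \ closedBall x r) w
              = connectedComponentIn (A \ closedBall x r) z) ∧
       (∀ w₁ ∈ A \ closedBall x r, ∀ w₂ ∈ A \ closedBall x r,
          connectedComponentIn (A \ closedBall x r) w₁
              ≠ connectedComponentIn (A \ closedBall x r) w₂ →
          Metric.diam (connectedComponentIn (A \ closedBall x r) w₁) ≤ c * r ∨
          Metric.diam (connectedComponentIn (A \ closedBall x r) w₂) ≤ c * r)) := by
  classical
  have hAconv : Convex ℝ A := by rw [hA]; exact convex_convexHull ℝ _
  have hAcomp : IsCompact A := by rw [hA]; exact V.finite_toSet.isCompact_convexHull ℝ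
  have hAclosed : IsClosed A := hAcomp.isClosed
  have hAbd := hAcomp.isBounded
  obtain ⟨z₀, hz₀⟩ := hint
  have hz₀A : A ∈ nhds z₀ := mem_interior_iff_mem_nhds.mp hz₀
  obtain ⟨ε, hεpos, hεball⟩ := Metric.mem_nhds_iff.mp hz₀A
  obtain ⟨ε₀, hε₀def⟩ : ∃ ε₀ : ℝ, ε₀ = ε/2 := ⟨_, rfl⟩
  have hε₀pos : 0 < ε₀ := by rw [hε₀def]; positivity
  have hball₀ : closedBall z₀ ε₀ ⊆ A := (closedBall_subset_ball (by rw [hε₀def]; linarith)).trans hεball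
  haveI : Nonempty (Fin d) := ⟨⟨0, by omega⟩⟩
  obtain ⟨v₀, hv₀⟩ := exists_ne (0 : EuclideanSpace ℝ (Fin d))
  obtain ⟨e₀, he₀def⟩ : ∃ e₀ : EuclideanSpace ℝ (Fin d), e₀ = ‖v₀‖⁻¹ • v₀ := ⟨_, rfl⟩
  have he₀ : ‖e₀‖ = 1 := by
    rw [he₀def, norm_smul, norm_inv, norm_norm, inv_mul_cancel₀ (norm_ne_zero_iff.mpr hv₀)]
  obtain ⟨D, hDdef⟩ : ∃ D : ℝ, D = Metric.diam A := ⟨_, rfl⟩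
  have hD0 : 0 ≤ D := hDdef ▸ Metric.diam_nonneg
  have hε₀D : ε₀ ≤ D := by
    have hee : z₀ + ε₀ • e₀ - z₀ = ε₀ • e₀ := by abel
    have h1 : z₀ + ε₀ • e₀ ∈ A := by
      apply hball₀
      rw [mem_closedBall, dist_eq_norm, hee, norm_smul, he₀, Real.norm_eq_abs,
        abs_of_pos hε₀pos, mul_one]
    have h2 : z₀ ∈ A := hball₀ (mem_closedBall_self hε₀pos.le)
    have h3 := Metric.dist_le_diam_of_mem hAbd h1 h2
    rw [dist_eq_norm, hee, norm_smul, he₀, Real.norm_eq_abs, abs_of_pos hε₀pos, mul_one] at h3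
    rw [hDdef]
    exact h3
  obtain ⟨M, hMdef⟩ : ∃ M : ℝ, M = 2 + 8*D/ε₀ := ⟨_, rfl⟩
  have hM2 : 2 ≤ M := by
    have h8 : 0 ≤ 8*D/ε₀ := div_nonneg (by linarith) hε₀pos.le
    linarith
  have hMpos : 0 < M := by linarith
  obtain ⟨m, hmpos, hm⟩ := finset_min_dist V
  refine ⟨min (ε₀/8) (m/(4*M)), lt_min (by linarith) (div_pos hmpos (by linarith)),
    2*M, by linarith, ?_⟩
  intro x hx r hr hrδ
  have hrε : r < ε₀/8 := hrδ.trans_le (min_le_left _ _)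
  have hrm : r < m/(4*M) := hrδ.trans_le (min_le_right _ _)
  have hrm' : 4*M*r < m := by
    rw [lt_div_iff₀ (by linarith)] at hrm
    linarith [hrm]
  set W : Set (EuclideanSpace ℝ (Fin d)) := A \ closedBall x r with hWdef
  obtain ⟨e₁, he₁, he₁sgn⟩ : ∃ e₁, ‖e₁‖ = 1 ∧ 0 ≤ ⟪z₀ - x, e₁⟫ := by
    rcases le_or_gt 0 ⟪z₀ - x, e₀⟫ with h | h
    · exact ⟨e₀, he₀, h⟩
    · exact ⟨-e₀, by rw [norm_neg]; exact he₀, by rw [inner_neg_right]; linarith⟩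
  obtain ⟨z₁, hz₁def⟩ : ∃ z₁, z₁ = z₀ + (ε₀/2) • e₁ := ⟨_, rfl⟩
  have hz₁z₀ : dist z₁ z₀ = ε₀/2 := by
    have hee : z₁ - z₀ = (ε₀/2) • e₁ := by rw [hz₁def]; abel
    rw [dist_eq_norm, hee, norm_smul, he₁, Real.norm_eq_abs, abs_of_pos (by linarith), mul_one]
  have hz₁A : z₁ ∈ A := by
    apply hball₀
    rw [mem_closedBall, hz₁z₀]
    linarith
  have hz₁x : ε₀/2 ≤ dist z₁ x := by
    rw [dist_eq_norm]
    have hee : z₁ - x = (z₀ - x) + (ε₀/2) • e₁ := by rw [hz₁def]; abel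
    have hsq := norm_add_sq_real (z₀ - x) ((ε₀/2) • e₁)
    rw [real_inner_smul_right] at hsq
    have hns : ‖(ε₀/2) • e₁‖ = ε₀/2 := by
      rw [norm_smul, he₁, Real.norm_eq_abs, abs_of_pos (by linarith), mul_one]
    rw [hns] at hsq
    rw [hee]
    nlinarith [norm_nonneg ((z₀ - x) + (ε₀/2) • e₁), norm_nonneg (z₀ - x)]
  have hz₁W : z₁ ∈ W := by
    refine ⟨hz₁A, fun hmem => ?_⟩
    rw [mem_closedBall] at hmem
    linarith [hz₁x]
  -- Claim A : every point far from x is in the component of z₁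
  have claimA : ∀ p ∈ A, M*r < dist p x →
      connectedComponentIn W p = connectedComponentIn W z₁ := by
    intro p hpA hpfar
    have hpx0 : x - p ≠ 0 := by
      intro h
      have h2 : dist p x = 0 := by
        rw [dist_eq_norm, ← norm_neg, neg_sub, h, norm_zero]
      nlinarith
    obtain ⟨n, hn, hnorth⟩ := exists_unit_orthogonal hd (x - p) hpx0
    obtain ⟨n₁, hn₁, horth, hsgn⟩ : ∃ n₁, ‖n₁‖ = 1 ∧ ⟪x - p, n₁⟫ = 0 ∧ 0 ≤ ⟪z₁ - p, n₁⟫ := by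
      rcases le_or_gt 0 ⟪z₁ - p, n⟫ with h | h
      · exact ⟨n, hn, hnorth, h⟩
      · exact ⟨-n, by rw [norm_neg]; exact hn, by rw [inner_neg_right, hnorth, neg_zero],
          by rw [inner_neg_right]; linarith⟩
    obtain ⟨q, hqdef⟩ : ∃ q, q = z₁ + (ε₀/4) • n₁ := ⟨_, rfl⟩
    have hqz₁ : dist q z₁ = ε₀/4 := by
      have hee : q - z₁ = (ε₀/4) • n₁ := by rw [hqdef]; abel
      rw [dist_eq_norm, hee, norm_smul, hn₁, Real.norm_eq_abs, abs_of_pos (by linarith), mul_one]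
    have hqz₀ : dist q z₀ ≤ ε₀ := by
      calc dist q z₀ ≤ dist q z₁ + dist z₁ z₀ := dist_triangle _ _ _
        _ = ε₀/4 + ε₀/2 := by rw [hqz₁, hz₁z₀]
        _ ≤ ε₀ := by linarith
    have hqA : q ∈ A := hball₀ (mem_closedBall.mpr hqz₀)
    have hqp2D : ‖q - p‖ ≤ 2*D := by
      have h1 : dist q p ≤ dist q z₀ + dist z₀ p := dist_triangle _ _ _
      have h2 : dist z₀ p ≤ D := by
        rw [hDdef]
        exact Metric.dist_le_diam_of_mem hAbd (hball₀ (mem_closedBall_self hε₀pos.le)) hpA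
      rw [← dist_eq_norm]
      linarith
    have key : ∀ mp ∈ segment ℝ p q, r < dist mp x := by
      intro mp hmp
      rw [segment_eq_image'] at hmp
      obtain ⟨θ, ⟨hθ0, hθ1⟩, heq⟩ := hmp
      simp only at heq
      subst heq
      have hsplit : p + θ • (q - p) - x = (p - x) + θ • (q - p) := by abel
      have hpxn : ⟪p - x, n₁⟫ = 0 := by
        have hee : p - x = -(x - p) := by abel
        rw [hee, inner_neg_left, horth, neg_zero]
      have hqp : q - p = (z₁ - p) + (ε₀/4) • n₁ := by rw [hqdef]; abel
      have hinner : ⟪p + θ • (q - p) - x, n₁⟫ = θ*(⟪z₁ - p, n₁⟫ + ε₀/4) := by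
        rw [hsplit, inner_add_left, real_inner_smul_left, hpxn, hqp, inner_add_left,
          real_inner_smul_left, real_inner_self_eq_norm_mul_norm, hn₁]
        ring
      have b1 : θ*(ε₀/4) ≤ ‖p + θ • (q - p) - x‖ := by
        have hb := real_inner_le_norm (p + θ • (q - p) - x) n₁
        rw [hn₁, mul_one, hinner] at hb
        nlinarith [mul_nonneg hθ0 hsgn]
      have b2 : dist p x - θ*(2*D) ≤ ‖p + θ • (q - p) - x‖ := by
        have he2 : p - x = (p + θ • (q - p) - x) - θ • (q - p) := by abel
        have htri : ‖p - x‖ ≤ ‖p + θ • (q - p) - x‖ + ‖θ • (q - p)‖ := by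
          rw [he2]
          exact norm_sub_le _ _
        have hθn : ‖θ • (q - p)‖ ≤ θ*(2*D) := by
          rw [norm_smul, Real.norm_eq_abs, abs_of_nonneg hθ0]
          exact mul_le_mul_of_nonneg_left hqp2D hθ0
        rw [dist_eq_norm]
        linarith
      rw [dist_eq_norm]
      rcases lt_or_ge r (θ*(ε₀/4)) with h | h
      · linarith
      · have hθ4 : θ*ε₀ ≤ 4*r := by linarith
        have h2D : θ*(2*D) ≤ (8*D/ε₀)*r := by
          rw [div_mul_eq_mul_div, le_div_iff₀ hε₀pos]
          nlinarith [mul_le_mul_of_nonneg_right hθ4 (by linarith : (0:ℝ) ≤ 2*D)]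
        have hMr : M*r = 2*r + (8*D/ε₀)*r := by rw [hMdef]; ring
        linarith
    have hpW : p ∈ W := by
      refine ⟨hpA, fun hmem => ?_⟩
      rw [mem_closedBall] at hmem
      nlinarith
    have hseg1 : segment ℝ p q ⊆ W := by
      intro mp hmp
      refine ⟨hAconv.segment_subset hpA hqA hmp, fun hmem => ?_⟩
      rw [mem_closedBall] at hmem
      linarith [key mp hmp]
    have hseg2 : segment ℝ q z₁ ⊆ W := by
      intro mp hmp
      have hball : segment ℝ q z₁ ⊆ closedBall z₁ (ε₀/4) :=
        (convex_closedBall z₁ (ε₀/4)).segment_subset (mem_closedBall.mpr hqz₁.le)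
          (mem_closedBall_self (by linarith))
      have hmz₁ : dist mp z₁ ≤ ε₀/4 := mem_closedBall.mp (hball hmp)
      constructor
      · apply hball₀
        rw [mem_closedBall]
        calc dist mp z₀ ≤ dist mp z₁ + dist z₁ z₀ := dist_triangle _ _ _
          _ ≤ ε₀/4 + ε₀/2 := by rw [hz₁z₀]; linarith
          _ ≤ ε₀ := by linarith
      · intro hmem
        rw [mem_closedBall] at hmem
        have htri : dist z₁ x ≤ dist z₁ mp + dist mp x := dist_triangle _ _ _
        rw [dist_comm z₁ mp] at htri
        linarith [hz₁x]
    have hSpre : IsPreconnected (segment ℝ p q ∪ segment ℝ q z₁) :=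
      IsPreconnected.union q (right_mem_segment ℝ p q) (left_mem_segment ℝ q z₁)
        (convex_segment p q).isPreconnected (convex_segment q z₁).isPreconnected
    have hSW : segment ℝ p q ∪ segment ℝ q z₁ ⊆ W := Set.union_subset hseg1 hseg2
    have hsub := hSpre.subset_connectedComponentIn
      (Set.mem_union_left _ (left_mem_segment ℝ p q)) hSW
    exact connectedComponentIn_eq (hsub (Set.mem_union_right _ (right_mem_segment ℝ q z₁)))
  -- Claim S : a component other than that of z₁ stays within distance M*r of x
  have claimS : ∀ w ∈ W, connectedComponentIn W w ≠ connectedComponentIn W z₁ →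
      ∀ p ∈ connectedComponentIn W w, dist p x ≤ M*r := by
    intro w hw hne p hp
    by_contra hgt
    push_neg at hgt
    have hpW : p ∈ W := connectedComponentIn_subset W w hp
    have h1 := claimA p hpW.1 hgt
    exact hne ((connectedComponentIn_eq hp).trans h1)
  -- Claim B : a component other than that of z₁ contains a vertex
  have claimB : ∀ w ∈ W, connectedComponentIn W w ≠ connectedComponentIn W z₁ →
      ∃ v, v ∈ (V : Set (EuclideanSpace ℝ (Fin d))) ∧ v ∈ connectedComponentIn W w := by
    intro w hw hne
    set C := connectedComponentIn W w with hCdef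
    have hCW : C ⊆ W := connectedComponentIn_subset W w
    have hCA : C ⊆ A := fun p hp => (hCW hp).1
    have hwC : w ∈ C := mem_connectedComponentIn hw
    have hclA : closure C ⊆ A := hAclosed.closure_subset_iff.mpr hCA
    have hclcomp : IsCompact (closure C) := hAcomp.of_isClosed_subset isClosed_closure hclA
    obtain ⟨p, hpcl, hpmax⟩ := hclcomp.exists_isMaxOn ⟨w, subset_closure hwC⟩
      ((continuous_id.dist continuous_const).continuousOn :
        ContinuousOn (fun q => dist q x) (closure C))
    have hwr : r < dist w x := by
      by_contra hle
      push_neg at hle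
      exact hw.2 (mem_closedBall.mpr hle)
    have hpr : r < dist p x := lt_of_lt_of_le hwr (hpmax (subset_closure hwC))
    have hpA : p ∈ A := hclA hpcl
    have hpW : p ∈ W := ⟨hpA, fun hmem => absurd (mem_closedBall.mp hmem) (not_le.mpr hpr)⟩
    have hclW : closure C ∩ W ⊆ C := by
      have hpre : IsPreconnected (closure C ∩ W) :=
        (isPreconnected_connectedComponentIn).subset_closure
          (Set.subset_inter subset_closure hCW) Set.inter_subset_left
      exact hpre.subset_connectedComponentIn ⟨subset_closure hwC, hw⟩ Set.inter_subset_right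
    have hpC : p ∈ C := hclW ⟨hpcl, hpW⟩
    have hCp : connectedComponentIn W p = C := (connectedComponentIn_eq hpC).symm
    obtain ⟨ρ, hρdef⟩ : ∃ ρ : ℝ, ρ = (dist p x - r)/2 := ⟨_, rfl⟩
    have hρ : 0 < ρ := by rw [hρdef]; linarith
    have hloc : ∀ q' ∈ A, dist q' p ≤ ρ → dist q' x ≤ dist p x := by
      intro q' hq'A hq'p
      have hsubW : A ∩ closedBall p ρ ⊆ W := by
        rintro q'' ⟨hq''A, hq''b⟩
        refine ⟨hq''A, fun hmem => ?_⟩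
        rw [mem_closedBall] at hq''b hmem
        have htri : dist p x ≤ dist p q'' + dist q'' x := dist_triangle _ _ _
        rw [dist_comm p q''] at htri
        rw [hρdef] at hq''b
        linarith
      have hconv : Convex ℝ (A ∩ closedBall p ρ) := hAconv.inter (convex_closedBall p ρ)
      have hsubC : A ∩ closedBall p ρ ⊆ C := by
        rw [← hCp]
        exact hconv.isPreconnected.subset_connectedComponentIn
          ⟨hpA, mem_closedBall_self hρ.le⟩ hsubW
      exact hpmax (subset_closure (hsubC ⟨hq'A, mem_closedBall.mpr hq'p⟩))
    have hext := extreme_of_localMax hAconv hpA hρ hloc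
    rw [hA] at hext
    exact ⟨p, extremePoints_convexHull_subset hext, hpC⟩
  -- diameter bound for small components
  have hdiam : ∀ w ∈ W, connectedComponentIn W w ≠ connectedComponentIn W z₁ →
      Metric.diam (connectedComponentIn W w) ≤ (2*M) * r := by
    intro w hw hne
    have hsub : connectedComponentIn W w ⊆ closedBall x (M*r) :=
      fun p hp => mem_closedBall.mpr (claimS w hw hne p hp)
    calc Metric.diam (connectedComponentIn W w) ≤ Metric.diam (closedBall x (M*r)) :=
          Metric.diam_mono hsub isBounded_closedBall
      _ ≤ 2*(M*r) := Metric.diam_closedBall (mul_nonneg (by linarith) hr.le)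
      _ = (2*M)*r := by ring
  constructor
  · -- at most two components
    by_cases hex : ∃ w₀ ∈ W, connectedComponentIn W w₀ ≠ connectedComponentIn W z₁
    · obtain ⟨w₀, hw₀W, hw₀⟩ := hex
      refine ⟨z₁, w₀, fun w hw => ?_⟩
      by_cases h : connectedComponentIn W w = connectedComponentIn W z₁
      · exact Or.inl h
      · right
        obtain ⟨v, hvV, hvC⟩ := claimB w hw h
        obtain ⟨v', hv'V, hv'C⟩ := claimB w₀ hw₀W hw₀
        have hvx : dist v x ≤ M*r := claimS w hw h v hvC
        have hv'x : dist v' x ≤ M*r := claimS w₀ hw₀W hw₀ v' hv'C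
        have hvv' : v = v' := by
          by_contra hneq
          have h1 := hm v hvV v' hv'V hneq
          have h2 : dist v v' ≤ dist v x + dist x v' := dist_triangle _ _ _
          rw [dist_comm x v'] at h2
          nlinarith
        have e1 : connectedComponentIn W w = connectedComponentIn W v :=
          connectedComponentIn_eq hvC
        have e2 : connectedComponentIn W w₀ = connectedComponentIn W v' :=
          connectedComponentIn_eq hv'C
        rw [e1, hvv', ← e2]
    · push_neg at hex
      exact ⟨z₁, z₁, fun w hw => Or.inl (hex w hw)⟩
  · -- diameter statement
    intro w₁ hw₁ w₂ hw₂ hne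
    by_cases h1 : connectedComponentIn W w₁ = connectedComponentIn W z₁
    · right
      apply hdiam w₂ hw₂
      intro h2
      exact hne (h1.trans h2.symm)
    · exact Or.inl (hdiam w₁ hw₁ h1)
end

section
/- Covering number of thickened faces: let A ⊂ ℝ^d be a compact convex polytope and φ a face of A of dimension D(φ). Then for any fixed constant C > 0, the C·r-neighbourhood of φ within A, namely {x ∈ A : dist(x, φ) ≤ Cr}, can be covered by O(r^{−D(φ)}) balls of radius r as r ↓ 0. -/
open Metric RealInnerProductSpace

private lemma aux_abs_round (t : ℝ) : |(round t : ℝ)| ≤ |t| + 1 / 2 := by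
  have h := abs_sub_round t
  have h2 := abs_sub_abs_le_abs_sub (round t : ℝ) t
  rw [abs_sub_comm] at h2
  linarith

private lemma aux_grid_dist {d : ℕ} (b : OrthonormalBasis (Fin d) ℝ (EuclideanSpace ℝ (Fin d)))
    (p x : EuclideanSpace ℝ (Fin d)) (sr : ℝ) (hsr : 0 < sr) :
    dist x (p + b.repr.symm (WithLp.toLp 2 (fun i => ((round (b.repr (x - p) i / sr) : ℤ) : ℝ) * sr)))
      ≤ Real.sqrt d * (sr / 2) := by
  set u : EuclideanSpace ℝ (Fin d) := b.repr (x - p) with hu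
  set g : EuclideanSpace ℝ (Fin d) := WithLp.toLp 2 (fun i => ((round (u i / sr) : ℤ) : ℝ) * sr) with hg
  have h1 : dist x (p + b.repr.symm g) = dist u g := by
    rw [dist_eq_norm]
    have : x - (p + b.repr.symm g) = (x - p) - b.repr.symm g := by abel
    rw [this, ← dist_eq_norm, ← b.repr.dist_map, hu, LinearIsometryEquiv.apply_symm_apply]
  rw [h1, EuclideanSpace.dist_eq]
  have hcoord : ∀ i, dist (u i) (g i) ^ 2 ≤ (sr / 2) ^ 2 := by
    intro i
    have h2 : u i - g i = sr * (u i / sr - (round (u i / sr) : ℝ)) := by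
      field_simp [hg]
      ring
    have h3 : |u i - g i| ≤ sr * (1 / 2) := by
      rw [h2, abs_mul, abs_of_pos hsr]
      exact mul_le_mul_of_nonneg_left (abs_sub_round _) hsr.le
    have : dist (u i) (g i) ≤ sr / 2 := by
      rw [Real.dist_eq]; linarith
    exact pow_le_pow_left₀ dist_nonneg this 2
  calc Real.sqrt (∑ i, dist (u i) (g i) ^ 2) ≤ Real.sqrt (∑ _i : Fin d, (sr / 2) ^ 2) :=
        Real.sqrt_le_sqrt (Finset.sum_le_sum fun i _ => hcoord i)
    _ = Real.sqrt (d * (sr / 2) ^ 2) := by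
        rw [Finset.sum_const, Finset.card_univ, Fintype.card_fin, nsmul_eq_mul]
    _ = Real.sqrt d * (sr / 2) := by
        rw [Real.sqrt_mul (by positivity), Real.sqrt_sq (by positivity)]

private lemma aux_grid_card {d Dφ : ℕ} (hDd : Dφ ≤ d) (N : Fin d → ℤ) (hN : ∀ i, 0 ≤ N i)
    (T₀ K₀ r : ℝ)
    (hNt : ∀ i : Fin d, (i : ℕ) < Dφ → (2 * (N i : ℝ) + 1) ≤ T₀ / r)
    (hNn : ∀ i : Fin d, ¬ (i : ℕ) < Dφ → (2 * (N i : ℝ) + 1) ≤ K₀) :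
    (((Fintype.piFinset fun i => Finset.Icc (-(N i)) (N i)).card : ℝ))
      ≤ (T₀ / r) ^ Dφ * K₀ ^ (d - Dφ) := by
  have hfilt : (Finset.univ.filter fun i : Fin d => (i : ℕ) < Dφ).card = Dφ := by
    have he : (Finset.univ.filter fun i : Fin d => (i : ℕ) < Dφ)
        = Finset.map (Fin.castLEEmb hDd) Finset.univ := by
      ext i
      simp only [Finset.mem_filter, Finset.mem_map, Finset.mem_univ, true_and]
      constructor
      · intro h; exact ⟨⟨i, h⟩, rfl⟩
      · rintro ⟨j, rfl⟩; exact j.isLt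
    rw [he, Finset.card_map, Finset.card_univ, Fintype.card_fin]
  have hfilt' : (Finset.univ.filter fun i : Fin d => ¬ (i : ℕ) < Dφ).card = d - Dφ := by
    have := Finset.card_filter_add_card_filter_not
      (s := (Finset.univ : Finset (Fin d))) (p := fun i : Fin d => (i : ℕ) < Dφ)
    rw [Finset.card_univ, Fintype.card_fin, hfilt] at this
    omega
  have hcard : ((Fintype.piFinset fun i => Finset.Icc (-(N i)) (N i)).card : ℝ)
      = ∏ i : Fin d, (2 * (N i : ℝ) + 1) := by
    rw [Fintype.card_piFinset]
    push_cast
    refine Finset.prod_congr rfl fun i _ => ?_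
    rw [Int.card_Icc]
    have h3 : N i + 1 - (-(N i)) = 2 * N i + 1 := by ring
    have h4 : (0 : ℤ) ≤ 2 * N i + 1 := by have := hN i; omega
    rw [h3]
    have h5 : (((2 * N i + 1).toNat : ℤ) : ℝ) = 2 * (N i : ℝ) + 1 := by
      rw [Int.toNat_of_nonneg h4]; push_cast; ring
    exact_mod_cast h5
  rw [hcard]
  have hle : ∏ i : Fin d, (2 * (N i : ℝ) + 1)
      ≤ ∏ i : Fin d, (if (i : ℕ) < Dφ then T₀ / r else K₀) := by
    refine Finset.prod_le_prod
      (fun i _ => by have : (0:ℝ) ≤ (N i : ℝ) := Int.cast_nonneg (hN i); linarith)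
      fun i _ => ?_
    by_cases h : (i : ℕ) < Dφ
    · rw [if_pos h]; exact hNt i h
    · rw [if_neg h]; exact hNn i h
  refine hle.trans (le_of_eq ?_)
  rw [Finset.prod_ite, Finset.prod_const, Finset.prod_const, hfilt, hfilt']

set_option maxHeartbeats 1600000 in
/-- Covering number of thickened faces: if `φ` is a face of a compact convex
polytope `A ⊂ ℝ^d` of dimension `Dφ`, then for any fixed `C > 0` the set
`{x ∈ A : dist(x,φ) ≤ C r}` can be covered by `O(r^{-Dφ})` balls of radius `r`
as `r ↓ 0`. -/
theorem covering_number_of_thickened_face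
    {d : ℕ} (V : Finset (EuclideanSpace ℝ (Fin d)))
    (A : Set (EuclideanSpace ℝ (Fin d)))
    (hA : A = convexHull ℝ (↑V : Set (EuclideanSpace ℝ (Fin d))))
    (φ : Set (EuclideanSpace ℝ (Fin d))) (hφA : φ ⊆ A) (hφne : φ.Nonempty)
    (Dφ : ℕ) (hdim : Module.finrank ℝ (affineSpan ℝ φ).direction = Dφ)
    (C : ℝ) (hC : 0 < C) :
    ∃ c > (0 : ℝ), ∃ r₀ > (0 : ℝ), ∀ r : ℝ, 0 < r → r < r₀ →
      ∃ F : Finset (EuclideanSpace ℝ (Fin d)),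
        (↑F : Set _) ⊆ {x ∈ A | infDist x φ ≤ C * r} ∧
        ({x ∈ A | infDist x φ ≤ C * r} ⊆ ⋃ y ∈ F, closedBall y r) ∧
        (F.card : ℝ) ≤ c / r ^ Dφ := by
  classical
  set E := (affineSpan ℝ φ).direction with hEdef
  have hDd : Dφ ≤ d := by
    rw [← hdim]
    calc Module.finrank ℝ E ≤ Module.finrank ℝ (EuclideanSpace ℝ (Fin d)) := E.finrank_le
      _ = d := finrank_euclideanSpace_fin
  obtain ⟨p, hp⟩ := hφne
  have hpA : p ∈ A := hφA hp
  have hAb : Bornology.IsBounded A := by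
    rw [hA]; exact (V.finite_toSet.isCompact_convexHull ℝ).isBounded
  obtain ⟨R0, hR0⟩ := hAb.subset_closedBall p
  set R : ℝ := max R0 1 with hRdef
  have hR1 : (1 : ℝ) ≤ R := le_max_right _ _
  have hRpos : 0 < R := lt_of_lt_of_le one_pos hR1
  have hRA : A ⊆ closedBall p R := hR0.trans (closedBall_subset_closedBall (le_max_left _ _))
  -- an orthonormal basis adapted to `E`
  let b₀ : OrthonormalBasis (Fin Dφ) ℝ E := (stdOrthonormalBasis ℝ E).reindex (finCongr hdim)
  let v : Fin d → EuclideanSpace ℝ (Fin d) :=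
    fun i => if h : (i : ℕ) < Dφ then (b₀ ⟨i, h⟩ : EuclideanSpace ℝ (Fin d)) else 0
  have hvs : Orthonormal ℝ (({i : Fin d | (i : ℕ) < Dφ}).restrict v) := by
    rw [orthonormal_iff_ite]
    rintro ⟨i, hi⟩ ⟨j, hj⟩
    have h1 : ({i : Fin d | (i : ℕ) < Dφ}).restrict v ⟨i, hi⟩
        = (b₀ ⟨i, hi⟩ : EuclideanSpace ℝ (Fin d)) := dif_pos hi
    have h2 : ({i : Fin d | (i : ℕ) < Dφ}).restrict v ⟨j, hj⟩
        = (b₀ ⟨j, hj⟩ : EuclideanSpace ℝ (Fin d)) := dif_pos hj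
    rw [h1, h2, ← Submodule.coe_inner]
    have := orthonormal_iff_ite.mp b₀.orthonormal ⟨i, hi⟩ ⟨j, hj⟩
    rw [this]
    by_cases h : (⟨i, hi⟩ : Fin Dφ) = ⟨j, hj⟩
    · have : i = j := by simpa [Fin.ext_iff] using h
      simp [h, this]
    · have : ¬ ((⟨i, hi⟩ : {i : Fin d | (i : ℕ) < Dφ}) = ⟨j, hj⟩) := by
        intro he; apply h; apply Fin.ext; simpa [Subtype.ext_iff, Fin.ext_iff] using he
      simp [h, this]
  obtain ⟨b, hb⟩ := hvs.exists_orthonormalBasis_extension_of_card_eq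
    (by simp [finrank_euclideanSpace_fin])
  have hbE : ∀ (j : Fin Dφ), b ⟨j, lt_of_lt_of_le j.isLt hDd⟩
      = (b₀ j : EuclideanSpace ℝ (Fin d)) := by
    intro j
    have := hb ⟨j, lt_of_lt_of_le j.isLt hDd⟩ (by simp)
    simpa [v] using this
  have hperp : ∀ (i : Fin d), ¬((i : ℕ) < Dφ) → ∀ w ∈ E, ⟪b i, w⟫ = 0 := by
    intro i hi w hw
    have hrep := congrArg (Subtype.val) (b₀.sum_repr ⟨w, hw⟩)
    push_cast at hrep
    rw [← hrep, inner_sum]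
    refine Finset.sum_eq_zero fun j _ => ?_
    rw [real_inner_smul_right, ← hbE j]
    have hne : i ≠ ⟨j, lt_of_lt_of_le j.isLt hDd⟩ := by
      intro he; apply hi; rw [he]; exact j.isLt
    rw [orthonormal_iff_ite.mp b.orthonormal i _, if_neg hne, mul_zero]
  -- constants
  set K₀ : ℝ := 2 * ((⌈2 * ((d : ℝ) + 1) * (C + 1)⌉₊ : ℝ) + 1) + 1 with hK₀def
  set T₀ : ℝ := 4 * R * ((d : ℝ) + 1) + 5 with hT₀def
  have hK₀pos : 0 < K₀ := by positivity
  have hT₀pos : 0 < T₀ := by positivity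
  refine ⟨T₀ ^ Dφ * K₀ ^ (d - Dφ), by positivity, 1, one_pos, fun r hr hr1 => ?_⟩
  set sr : ℝ := r / (2 * ((d : ℝ) + 1)) with hsrdef
  have hsr : 0 < sr := by positivity
  set S : Set (EuclideanSpace ℝ (Fin d)) := {x ∈ A | infDist x φ ≤ C * r} with hSdef
  have hpS : p ∈ S := ⟨hpA, by rw [infDist_zero_of_mem hp]; positivity⟩
  set N : Fin d → ℤ := fun i =>
    if (i : ℕ) < Dφ then (⌈R / sr⌉₊ : ℤ) + 1 else (⌈2 * ((d : ℝ) + 1) * (C + 1)⌉₊ : ℤ) + 1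
    with hNdef
  have hNnonneg : ∀ i, 0 ≤ N i := by
    intro i; rw [hNdef]; dsimp only; split <;> positivity
  set G : Finset (Fin d → ℤ) := Fintype.piFinset fun i => Finset.Icc (-(N i)) (N i) with hGdef
  set pt : (Fin d → ℤ) → EuclideanSpace ℝ (Fin d) :=
    fun k => p + b.repr.symm (WithLp.toLp 2 (fun i => ((k i : ℤ) : ℝ) * sr)) with hptdef
  -- key covering claim
  have key : ∀ x ∈ S, ∃ k ∈ G, dist x (pt k) ≤ r / 4 := by
    intro x hx
    obtain ⟨hxA, hxd⟩ := hx
    have hxφ : infDist x φ < C * r + r := lt_of_le_of_lt hxd (by linarith)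
    obtain ⟨y, hy, hxy⟩ := (infDist_lt_iff ⟨p, hp⟩).mp hxφ
    set u : EuclideanSpace ℝ (Fin d) := b.repr (x - p) with hu
    set k : Fin d → ℤ := fun i => round (u i / sr) with hk
    have hub : ∀ i : Fin d, |u i| ≤ R := by
      intro i
      have h1 : u i = ⟪b i, x - p⟫ := b.repr_apply_apply (x - p) i
      have h2 := abs_real_inner_le_norm (b i) (x - p)
      rw [b.orthonormal.1 i, one_mul] at h2
      have h3 : ‖x - p‖ ≤ R := by
        rw [← dist_eq_norm]; exact mem_closedBall.mp (hRA hxA)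
      rw [h1]; exact h2.trans h3
    have hun : ∀ i : Fin d, ¬ (i : ℕ) < Dφ → |u i| ≤ (C + 1) * r := by
      intro i hi
      have h1 : u i = ⟪b i, x - p⟫ := b.repr_apply_apply (x - p) i
      have h2 : x - p = (x - y) + (y - p) := by abel
      have h3 : y - p ∈ E := by
        have := AffineSubspace.vsub_mem_direction
          (subset_affineSpan ℝ φ hy) (subset_affineSpan ℝ φ hp)
        simpa [hEdef] using this
      have h4 : ⟪b i, y - p⟫ = 0 := hperp i hi _ h3
      have h5 : u i = ⟪b i, x - y⟫ := by rw [h1, h2, inner_add_right, h4, add_zero]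
      have h6 := abs_real_inner_le_norm (b i) (x - y)
      rw [b.orthonormal.1 i, one_mul] at h6
      have h7 : ‖x - y‖ ≤ (C + 1) * r := by
        rw [← dist_eq_norm]; nlinarith [hxy]
      rw [h5]; exact h6.trans h7
    have hkG : k ∈ G := by
      rw [hGdef, Fintype.mem_piFinset]
      intro i
      rw [Finset.mem_Icc, ← abs_le]
      have habs : |(k i : ℝ)| ≤ |u i| / sr + 1 / 2 := by
        have := aux_abs_round (u i / sr)
        rwa [abs_div, abs_of_pos hsr] at this
      by_cases hi : (i : ℕ) < Dφ
      · have hNi : (N i : ℝ) = (⌈R / sr⌉₊ : ℝ) + 1 := by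
          rw [hNdef]; dsimp only; rw [if_pos hi]; push_cast; ring
        have h1 : |u i| / sr ≤ R / sr := by gcongr; exact hub i
        have h2 : R / sr ≤ (⌈R / sr⌉₊ : ℝ) := Nat.le_ceil _
        have h6 : |(k i : ℝ)| ≤ (N i : ℝ) := by rw [hNi]; linarith
        exact_mod_cast h6
      · have hNi : (N i : ℝ) = (⌈2 * ((d : ℝ) + 1) * (C + 1)⌉₊ : ℝ) + 1 := by
          rw [hNdef]; dsimp only; rw [if_neg hi]; push_cast; ring
        have h1 : |u i| / sr ≤ ((C + 1) * r) / sr := by gcongr; exact hun i hi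
        have h2 : ((C + 1) * r) / sr = 2 * ((d : ℝ) + 1) * (C + 1) := by
          rw [hsrdef]; field_simp
        have h3 : 2 * ((d : ℝ) + 1) * (C + 1) ≤ (⌈2 * ((d : ℝ) + 1) * (C + 1)⌉₊ : ℝ) :=
          Nat.le_ceil _
        have h6 : |(k i : ℝ)| ≤ (N i : ℝ) := by rw [hNi]; rw [h2] at h1; linarith
        exact_mod_cast h6
    refine ⟨k, hkG, ?_⟩
    have hd := aux_grid_dist b p x sr hsr
    have hsqrt : Real.sqrt d ≤ (d : ℝ) + 1 := by
      have h1 : (d : ℝ) ≤ ((d : ℝ) + 1) ^ 2 := by nlinarith [Nat.cast_nonneg (α := ℝ) d]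
      calc Real.sqrt d ≤ Real.sqrt (((d : ℝ) + 1) ^ 2) := Real.sqrt_le_sqrt h1
        _ = (d : ℝ) + 1 := Real.sqrt_sq (by positivity)
    have heq : ((d : ℝ) + 1) * (sr / 2) = r / 4 := by
      rw [hsrdef]; field_simp; ring
    calc dist x (pt k) ≤ Real.sqrt d * (sr / 2) := hd
      _ ≤ ((d : ℝ) + 1) * (sr / 2) := by
          apply mul_le_mul_of_nonneg_right hsqrt (by positivity)
      _ = r / 4 := heq
  -- the finite set of centres
  set f : (Fin d → ℤ) → EuclideanSpace ℝ (Fin d) :=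
    fun k => if h : ∃ z, z ∈ S ∧ dist z (pt k) ≤ r / 4 then h.choose else p with hfdef
  have hfS : ∀ k, f k ∈ S := by
    intro k
    rw [hfdef]; dsimp only
    split
    · next h => exact h.choose_spec.1
    · exact hpS
  refine ⟨G.image f, ?_, ?_, ?_⟩
  · intro x hx
    obtain ⟨k, _, rfl⟩ := Finset.mem_image.mp (by exact_mod_cast hx)
    exact hfS k
  · intro x hx
    obtain ⟨k, hkG, hkd⟩ := key x hx
    have hex : ∃ z, z ∈ S ∧ dist z (pt k) ≤ r / 4 := ⟨x, hx, hkd⟩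
    have hfk : f k = hex.choose := dif_pos hex
    have hxf : dist x (f k) ≤ r := by
      have h1 := hex.choose_spec.2
      calc dist x (f k) ≤ dist x (pt k) + dist (pt k) (f k) := dist_triangle _ _ _
        _ = dist x (pt k) + dist (f k) (pt k) := by rw [dist_comm (pt k)]
        _ ≤ r / 4 + r / 4 := by rw [hfk]; exact add_le_add hkd h1
        _ ≤ r := by linarith
    refine Set.mem_iUnion₂.mpr ⟨f k, ?_, mem_closedBall.mpr hxf⟩
    exact Finset.mem_image_of_mem f hkG
  · have hcard : ((G.image f).card : ℝ) ≤ (G.card : ℝ) := by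
      exact_mod_cast Finset.card_image_le
    have hNt : ∀ i : Fin d, (i : ℕ) < Dφ → (2 * (N i : ℝ) + 1) ≤ T₀ / r := by
      intro i hi
      have hNi : (N i : ℝ) = (⌈R / sr⌉₊ : ℝ) + 1 := by
        rw [hNdef]; dsimp only; rw [if_pos hi]; push_cast; ring
      have hceil : (⌈R / sr⌉₊ : ℝ) < R / sr + 1 := Nat.ceil_lt_add_one (by positivity)
      have hRsr : R / sr = 2 * R * ((d : ℝ) + 1) / r := by
        rw [hsrdef]; field_simp
      have h5r : (5 : ℝ) ≤ 5 / r := by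
        rw [le_div_iff₀ hr]; nlinarith [hr1, hr]
      have hT : T₀ / r = 4 * R * ((d : ℝ) + 1) / r + 5 / r := by
        rw [hT₀def]; ring
      rw [hNi, hT]
      have : 2 * (2 * R * ((d : ℝ) + 1) / r) = 4 * R * ((d : ℝ) + 1) / r := by ring
      linarith
    have hNn : ∀ i : Fin d, ¬ (i : ℕ) < Dφ → (2 * (N i : ℝ) + 1) ≤ K₀ := by
      intro i hi
      have hNi : (N i : ℝ) = (⌈2 * ((d : ℝ) + 1) * (C + 1)⌉₊ : ℝ) + 1 := by
        rw [hNdef]; dsimp only; rw [if_neg hi]; push_cast; ring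
      rw [hNi, hK₀def]
    have hG := aux_grid_card hDd N hNnonneg T₀ K₀ r hNt hNn
    rw [hGdef] at hcard ⊢
    refine (hcard.trans hG).trans (le_of_eq ?_)
    rw [div_pow, div_mul_eq_mul_div]
end

section
/- Finiteness of the face distance ratio: let A ⊂ ℝ^d be a compact convex polytope, and let φ, φ' be faces of A with dim φ > 0, dim φ' = d−1, and φ \ φ' ≠ ∅. Then the relative interior φ° of φ is disjoint from φ', and K(φ,φ') := sup_{x ∈ φ°} dist(x, ∂φ)/dist(x, φ') is finite. -/
open Metric

private lemma le_infDist_aux {E : Type*} [NormedAddCommGroup E] {s : Set E} {x : E} {b : ℝ}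
    (hb : 0 ≤ b) (H : ∀ y ∈ s, b ≤ dist x y) (hs : s.Nonempty) : b ≤ Metric.infDist x s := by
  have h1 : ENNReal.ofReal b ≤ EMetric.infEdist x s :=
    EMetric.le_infEdist.2 fun y hy => by
      rw [edist_dist]; exact ENNReal.ofReal_le_ofReal (H y hy)
  have h2 := ENNReal.toReal_mono (Metric.infEdist_ne_top hs) h1
  rwa [ENNReal.toReal_ofReal hb] at h2

/-- If `x` is in the intrinsic interior of `φ` and `q ∈ affineSpan ℝ φ`, one can move
slightly beyond `x` away from `q` and stay in `φ`. -/
private lemma push_out {E : Type*} [NormedAddCommGroup E] [NormedSpace ℝ E]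
    {φ : Set E} {x q : E} (hx : x ∈ intrinsicInterior ℝ φ) (hq : q ∈ affineSpan ℝ φ) :
    ∃ t : ℝ, 0 < t ∧ x + t • (x - q) ∈ φ := by
  obtain ⟨x', hx', hxx⟩ := hx
  have hxS : x ∈ affineSpan ℝ φ := hxx ▸ x'.2
  have hmem : ∀ t : ℝ, x + t • (x - q) ∈ affineSpan ℝ φ := by
    intro t
    have := (affineSpan ℝ φ).smul_vsub_vadd_mem t hxS hq hxS
    simpa [vsub_eq_sub, vadd_eq_add, add_comm] using this
  set g : ℝ → (affineSpan ℝ φ : Set E) := fun t => ⟨x + t • (x - q), hmem t⟩ with hg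
  have hgc : Continuous g := by
    apply Continuous.subtype_mk
    fun_prop
  have hg0 : g 0 = x' := by
    apply Subtype.ext
    simp [hg, ← hxx]
  have hopen : IsOpen (g ⁻¹' interior ((↑) ⁻¹' φ : Set (affineSpan ℝ φ))) :=
    isOpen_interior.preimage hgc
  have h0 : (0 : ℝ) ∈ g ⁻¹' interior ((↑) ⁻¹' φ : Set (affineSpan ℝ φ)) := by
    simp only [Set.mem_preimage, hg0]; exact hx'
  obtain ⟨ε, hε, hball⟩ := Metric.isOpen_iff.1 hopen 0 h0
  refine ⟨ε / 2, by positivity, ?_⟩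
  have : (ε / 2 : ℝ) ∈ Metric.ball (0 : ℝ) ε := by
    rw [Metric.mem_ball, Real.dist_eq, sub_zero, abs_of_pos (by positivity : (0:ℝ) < ε / 2)]
    linarith
  have := interior_subset (hball this)
  exact this

/-- Exit point of the ray from `q` through `x` : a point of `φ` outside the
intrinsic interior. -/
private lemma exit_point {E : Type*} [NormedAddCommGroup E] [NormedSpace ℝ E]
    {φ : Set E} (hb : Bornology.IsBounded φ) (hc : IsClosed φ)
    {x q : E} (hx : x ∈ φ) (hq : q ∈ affineSpan ℝ φ) (hxq : x ≠ q) :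
    ∃ s : ℝ, 0 ≤ s ∧ x + s • (x - q) ∈ φ ∧ x + s • (x - q) ∉ intrinsicInterior ℝ φ := by
  set T : Set ℝ := {t : ℝ | 0 ≤ t ∧ x + t • (x - q) ∈ φ} with hT
  have h0T : (0 : ℝ) ∈ T := ⟨le_refl 0, by simpa using hx⟩
  obtain ⟨C, hC⟩ := isBounded_iff.1 hb
  have hxqn : 0 < ‖x - q‖ := by
    rw [norm_pos_iff, sub_ne_zero]; exact hxq
  have hbdd : BddAbove T := by
    refine ⟨C / ‖x - q‖, fun t ht => ?_⟩
    have := hC ht.2 hx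
    have hdist : dist (x + t • (x - q)) x = t * ‖x - q‖ := by
      rw [dist_eq_norm]
      simp [norm_smul, abs_of_nonneg ht.1]
    rw [le_div_iff₀ hxqn]
    calc t * ‖x - q‖ = dist (x + t • (x - q)) x := hdist.symm
      _ ≤ C := hC ht.2 hx
  have hclosed : IsClosed T := by
    have : T = Set.Ici (0:ℝ) ∩ (fun t : ℝ => x + t • (x - q)) ⁻¹' φ := by
      ext t; simp [hT, Set.mem_Ici]
    rw [this]
    exact isClosed_Ici.inter (hc.preimage (by fun_prop))
  have hsT : sSup T ∈ T := hclosed.csSup_mem ⟨0, h0T⟩ hbdd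
  refine ⟨sSup T, hsT.1, hsT.2, ?_⟩
  intro hint
  obtain ⟨δ, hδ, hmem⟩ := push_out hint hq
  have hrw : x + sSup T • (x - q) + δ • (x + sSup T • (x - q) - q)
      = x + (sSup T + δ * (1 + sSup T)) • (x - q) := by
    have : x + sSup T • (x - q) - q = (1 + sSup T) • (x - q) := by
      rw [add_smul, one_smul]; abel
    rw [this, smul_smul, add_smul]
    abel
  rw [hrw] at hmem
  have hT' : sSup T + δ * (1 + sSup T) ∈ T :=
    ⟨by nlinarith [hsT.1], hmem⟩
  have := le_csSup hbdd hT'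
  nlinarith [hsT.1]

/-- Finiteness of the face distance ratio: if `φ, φ'` are faces of a compact convex
polytope `A ⊂ ℝ^d` with `dim φ > 0`, `dim φ' = d - 1` and `φ \ φ' ≠ ∅`, then the
relative interior `φ°` is disjoint from `φ'` and
`K(φ,φ') = sup_{x ∈ φ°} dist(x, ∂φ)/dist(x, φ')` is finite. -/
theorem face_distance_ratio_finite
    {d : ℕ} (V : Finset (EuclideanSpace ℝ (Fin d)))
    (A : Set (EuclideanSpace ℝ (Fin d)))
    (hA : A = convexHull ℝ (↑V : Set (EuclideanSpace ℝ (Fin d))))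
    (hint : (interior A).Nonempty)
    (φ φ' : Set (EuclideanSpace ℝ (Fin d)))
    (hφ : IsExposed ℝ A φ) (hφ' : IsExposed ℝ A φ')
    (hφne : φ.Nonempty) (hφ'ne : φ'.Nonempty)
    (hdim : 0 < Module.finrank ℝ (affineSpan ℝ φ).direction)
    (hdim' : Module.finrank ℝ (affineSpan ℝ φ').direction = d - 1)
    (hne : (φ \ φ').Nonempty) :
    intrinsicInterior ℝ φ ∩ φ' = ∅ ∧
    ∃ K : ℝ, ∀ x ∈ intrinsicInterior ℝ φ,
      Metric.infDist x (φ \ intrinsicInterior ℝ φ) ≤ K * Metric.infDist x φ' := by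
  -- basic topology of A and φ
  have hAcomp : IsCompact A := hA ▸ V.finite_toSet.isCompact_convexHull ℝ
  have hφsub : φ ⊆ A := hφ.subset
  have hφ'sub : φ' ⊆ A := hφ'.subset
  have hφclosed : IsClosed φ := hφ.isClosed hAcomp.isClosed
  have hφbdd : Bornology.IsBounded φ := hAcomp.isBounded.subset hφsub
  -- exposing functional for φ'
  obtain ⟨l, hl⟩ := hφ' hφ'ne
  obtain ⟨x₀, hx₀⟩ := id hφ'ne
  set c : ℝ := l x₀ with hc
  have hx₀' := hl ▸ hx₀
  have hmax : ∀ y ∈ A, l y ≤ c := hx₀'.2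
  have hφ'c : ∀ z ∈ φ', l z = c := by
    intro z hz
    have hz' := hl ▸ hz
    exact le_antisymm (hmax z (hφ'sub hz)) (hz'.2 x₀ (hφ'sub hx₀))
  obtain ⟨p, hpφ, hpφ'⟩ := hne
  have hpA : p ∈ A := hφsub hpφ
  have hplt : l p < c := by
    rcases lt_or_eq_of_le (hmax p hpA) with h | h
    · exact h
    · exfalso
      apply hpφ'
      rw [hl]
      exact ⟨hpA, fun y hy => h ▸ hmax y hy⟩
  set ε : ℝ := c - l p with hε
  have hεpos : 0 < ε := by simp [hε]; linarith
  -- value of l along rays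
  have hlray : ∀ (x : EuclideanSpace ℝ (Fin d)) (t : ℝ),
      l (x + t • (x - p)) = l x + t * (l x - l p) := by
    intro x t
    simp [map_add, map_smul, map_sub, smul_eq_mul]
  -- Part 1
  have part1 : intrinsicInterior ℝ φ ∩ φ' = ∅ := by
    rw [Set.eq_empty_iff_forall_notMem]
    rintro x ⟨hx, hx'⟩
    obtain ⟨t, ht, htφ⟩ := push_out hx (subset_affineSpan ℝ φ hpφ)
    have h1 : l (x + t • (x - p)) ≤ c := hmax _ (hφsub htφ)
    rw [hlray, hφ'c x hx'] at h1
    nlinarith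
  refine ⟨part1, ?_⟩
  -- operator norm positivity
  have hlnorm : 0 < ‖l‖ := by
    rcases (norm_nonneg l).lt_or_eq with h | h
    · exact h
    · exfalso
      have hl0 : l = 0 := by rwa [eq_comm, norm_eq_zero] at h
      have hε0 : ε = 0 := by rw [hε, hc, hl0]; simp
      linarith
  -- diameter bound
  obtain ⟨D, hD⟩ := isBounded_iff.1 hφbdd
  have hDpos : 0 ≤ D := by
    have := hD hpφ hpφ
    simpa using this
  refine ⟨D * ‖l‖ / ε, ?_⟩
  intro x hx
  have hxφ : x ∈ φ := intrinsicInterior_subset hx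
  have hxA : x ∈ A := hφsub hxφ
  -- lower bound on infDist x φ'
  have hinf : (c - l x) / ‖l‖ ≤ Metric.infDist x φ' := by
    apply le_infDist_aux _ _ hφ'ne
    · apply div_nonneg _ hlnorm.le
      linarith [hmax x hxA]
    · intro z hz
      rw [div_le_iff₀ hlnorm]
      have h1 : c - l x = l (z - x) := by rw [map_sub, hφ'c z hz]
      have h2 : ‖l (z - x)‖ ≤ ‖l‖ * ‖z - x‖ := l.le_opNorm _
      calc c - l x ≤ ‖l (z - x)‖ := h1 ▸ le_abs_self _
        _ ≤ ‖l‖ * ‖z - x‖ := h2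
        _ = dist x z * ‖l‖ := by rw [mul_comm, dist_eq_norm, norm_sub_rev]
  -- key estimate : infDist x ∂φ ≤ (D/ε) (c - l x)
  have hkey : Metric.infDist x (φ \ intrinsicInterior ℝ φ) ≤ D / ε * (c - l x) := by
    by_cases hxp : x = p
    · -- x = p : coarse bound via any exit direction
      have hq : ∃ q ∈ φ, q ≠ x := by
        by_contra h
        push_neg at h
        have : φ = {x} := Set.eq_singleton_iff_unique_mem.2 ⟨hxφ, fun q hq => h q hq⟩
        rw [this] at hdim
        rw [direction_affineSpan, vectorSpan_singleton] at hdim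
        simp at hdim
      obtain ⟨q, hqφ, hqx⟩ := hq
      obtain ⟨s, hs0, hyφ, hyint⟩ :=
        exit_point hφbdd hφclosed hxφ (subset_affineSpan ℝ φ hqφ) (Ne.symm hqx)
      have h1 : Metric.infDist x (φ \ intrinsicInterior ℝ φ) ≤ dist x (x + s • (x - q)) :=
        infDist_le_dist_of_mem ⟨hyφ, hyint⟩
      have h2 : dist x (x + s • (x - q)) ≤ D := by
        rw [dist_comm]
        exact hD hyφ hxφ
      have h3 : c - l x = ε := by rw [hε, hxp]
      rw [h3, div_mul_cancel₀ _ (ne_of_gt hεpos)]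
      linarith
    · -- x ≠ p : quantitative ray bound
      obtain ⟨s, hs0, hyφ, hyint⟩ :=
        exit_point hφbdd hφclosed hxφ (subset_affineSpan ℝ φ hpφ) hxp
      set y := x + s • (x - p) with hy
      have h1 : Metric.infDist x (φ \ intrinsicInterior ℝ φ) ≤ dist x y :=
        infDist_le_dist_of_mem ⟨hyφ, hyint⟩
      have hdxy : dist x y = s * ‖x - p‖ := by
        rw [hy, dist_eq_norm]
        simp [norm_smul, abs_of_nonneg hs0]
      have hdpy : dist p y = (1 + s) * ‖x - p‖ := by
        rw [hy, dist_eq_norm]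
        have : p - (x + s • (x - p)) = -((1 + s) • (x - p)) := by
          module
        rw [this, norm_neg, norm_smul]
        congr 1
        rw [Real.norm_eq_abs, abs_of_nonneg (by linarith)]
      have hDb : (1 + s) * ‖x - p‖ ≤ D := hdpy ▸ hD hpφ hyφ
      have hly : l y ≤ c := hmax y (hφsub hyφ)
      have hlyeq : l y = l x + s * (l x - l p) := hlray x s
      -- (1+s)(c - l x) = (c - l y) + s ε
      have hcomb : (1 + s) * (c - l x) = (c - l y) + s * ε := by
        rw [hlyeq, hε]; ring
      have hfin : s * ‖x - p‖ ≤ D / ε * (c - l x) := by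
        rw [div_mul_eq_mul_div, le_div_iff₀ hεpos]
        have hA1 : s * ε ≤ (1 + s) * (c - l x) := by nlinarith [hly]
        have hA2 : (s * ε) * ((1 + s) * ‖x - p‖) ≤ (s * ε) * D :=
          mul_le_mul_of_nonneg_left hDb (mul_nonneg hs0 hεpos.le)
        have hA3 : D * (s * ε) ≤ D * ((1 + s) * (c - l x)) :=
          mul_le_mul_of_nonneg_left hA1 hDpos
        have h1s : (0:ℝ) < 1 + s := by linarith
        nlinarith [hA2, hA3, h1s]
      calc Metric.infDist x (φ \ intrinsicInterior ℝ φ) ≤ dist x y := h1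
        _ = s * ‖x - p‖ := hdxy
        _ ≤ D / ε * (c - l x) := hfin
  calc Metric.infDist x (φ \ intrinsicInterior ℝ φ) ≤ D / ε * (c - l x) := hkey
    _ = (D * ‖l‖ / ε) * ((c - l x) / ‖l‖) := by
        field_simp
    _ ≤ (D * ‖l‖ / ε) * Metric.infDist x φ' := by
        apply mul_le_mul_of_nonneg_left hinf
        positivity
end
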